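/- In the group G = GL_2(W) ⋊ C₂, let G₂₄ be the subgroup generated by a, ω² and ωφ. Then G₂₄ has exactly 24 elements, the cyclic subgroup ⟨a⟩ of order 3 is normal in G₂₄, the subgroup Q = ⟨ω², ωφ⟩ is isomorphic to the quaternion group Q₈ of order 8, ⟨a⟩ ∩ Q = {1}, and G₂₄ = ⟨a⟩·Q; that is, G₂₄ is an internal semidirect product C₃ ⋊ Q₈ (with ω² acting on ⟨a⟩ by inversion and ωφ acting trivially). -/

import Mathlib

/-!
Write `M = ωS`. Since `S ι(x) = ι(σ x) S` and `ω₀ σ(ω₀) = ω₀⁴ = -1`, we get `M² = -3`, so `M` is a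
square root of `-3` and `a = -(1 + M)/2` is a primitive cube root of unity. Conjugation by `ω²`
negates `M` and conjugation by `ωφ` fixes it, so `ω²` inverts `a` and `ωφ` centralises it.
Conjugation by `φ` sends `ω` to `ω³`, which gives the quaternion relations for `x = ω²`,
`y = ωφ`: `x` has order `4`, `y² = x²` and `y x y⁻¹ = x⁻¹`. Hence `a i ↦ xⁱ`, `xa i ↦ y xⁱ` maps
`Q₈` onto `Q = ⟨x, y⟩`, injectively because `y ∉ ⟨x⟩`. Finally `⟨a⟩` has order `3`, prime to
`|Q| = 8`, and is normalised by `Q`, so `⟨a, x, y⟩ = ⟨a⟩Q` has `3 · 8 = 24` elements.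
-/

open Matrix

/-- `𝔽₉`, the field with nine elements. -/
abbrev F9 : Type := GaloisField 3 2

/-- `W = 𝕎(𝔽₉)`, the ring of Witt vectors of `𝔽₉`. -/
abbrev Wq : Type := WittVector 3 F9

/-- `σ`, the Frobenius automorphism of `W = 𝕎(𝔽₉)`. -/
noncomputable def σW : Wq ≃+* Wq := WittVector.frobeniusEquiv 3 F9

/-- `ι : W → M₂(W)`, `ι(x) = diag(x, σ(x))`. -/
noncomputable def iw (x : Wq) : Matrix (Fin 2) (Fin 2) Wq := !![x, 0; 0, σW x]

/-- The matrix `S` with rows `(0, 3)` and `(1, 0)`. -/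
noncomputable def Sm : Matrix (Fin 2) (Fin 2) Wq := !![0, 3; 1, 0]

/-- `φ`, the ring automorphism of `M₂(W)` applying `σ` to each matrix entry. -/
noncomputable def φM : Matrix (Fin 2) (Fin 2) Wq ≃+* Matrix (Fin 2) (Fin 2) Wq :=
  σW.mapMatrix

/-- The cyclic group of order two. -/
abbrev C2 : Type := Multiplicative (ZMod 2)

namespace QuaternionGroup

variable {G : Type*} [Group G] {n : ℕ} {x y : G}

lemma pow_val_add [NeZero n] (hx : x ^ (2 * n) = 1) (i j : ZMod (2 * n)) :
    x ^ (i + j).val = x ^ i.val * x ^ j.val := by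
  rw [ZMod.val_add, ← pow_eq_pow_mod _ hx, pow_add]

lemma pow_val_sub [NeZero n] (hx : x ^ (2 * n) = 1) (i j : ZMod (2 * n)) :
    x ^ (j - i).val = (x ^ i.val)⁻¹ * x ^ j.val := by
  rw [eq_inv_mul_iff_mul_eq, ← pow_val_add hx, add_sub_cancel]

lemma pow_val_natCast (hx : x ^ (2 * n) = 1) (k : ℕ) :
    x ^ (k : ZMod (2 * n)).val = x ^ k := by
  rw [ZMod.val_natCast, ← pow_eq_pow_mod _ hx]

lemma pow_mul_eq_mul_inv_pow (hyx : y * x * y⁻¹ = x⁻¹) (k : ℕ) :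
    x ^ k * y = y * (x ^ k)⁻¹ := by
  have hconj : y * x⁻¹ * y⁻¹ = x := by simpa [mul_assoc] using congrArg (·⁻¹) hyx
  have hconj_pow : y * (x ^ k)⁻¹ * y⁻¹ = x ^ k := by rw [← inv_pow, ← conj_pow, hconj]
  calc x ^ k * y = y * (x ^ k)⁻¹ * y⁻¹ * y := by rw [hconj_pow]
    _ = y * (x ^ k)⁻¹ := inv_mul_cancel_right _ _

def lift [NeZero n] (hx : x ^ (2 * n) = 1) (hy : y ^ 2 = x ^ n) (hyx : y * x * y⁻¹ = x⁻¹) :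
    QuaternionGroup n →* G where
  toFun
    | a i => x ^ i.val
    | xa i => y * x ^ i.val
  map_one' := by rw [one_def]; exact congrArg (x ^ ·) ZMod.val_zero |>.trans (pow_zero x)
  map_mul' := by
    rintro (i | i) (j | j)
    · exact pow_val_add hx i j
    · show y * x ^ (j - i).val = x ^ i.val * (y * x ^ j.val)
      rw [pow_val_sub hx, ← mul_assoc (x ^ i.val), pow_mul_eq_mul_inv_pow hyx, mul_assoc]
    · show y * x ^ (i + j).val = y * x ^ i.val * x ^ j.val
      rw [pow_val_add hx, mul_assoc]
    · show x ^ ((n : ZMod (2 * n)) + j - i).val = y * x ^ i.val * (y * x ^ j.val)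
      rw [pow_val_sub hx, pow_val_add hx, pow_val_natCast hx, mul_assoc y,
        ← mul_assoc (x ^ i.val), pow_mul_eq_mul_inv_pow hyx]
      simp only [← mul_assoc]
      rw [← sq, hy]
      group

lemma lift_injective [NeZero n] (hx : orderOf x = 2 * n) (hy : y ^ 2 = x ^ n)
    (hyx : y * x * y⁻¹ = x⁻¹) :
    Function.Injective (lift (hx ▸ pow_orderOf_eq_one x) hy hyx) := by
  rw [injective_iff_map_eq_one]
  rintro (i | i) h
  · change x ^ i.val = 1 at h
    have hdvd := orderOf_dvd_of_pow_eq_one h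
    rw [hx] at hdvd
    have hi : i.val = 0 := Nat.eq_zero_of_dvd_of_lt hdvd (ZMod.val_lt i)
    rw [(ZMod.val_eq_zero i).mp hi, a_zero]
  · change y * x ^ i.val = 1 at h
    -- `y ∈ ⟨x⟩` would commute with `x`, forcing `x² = 1`, hence `x ^ n = y ^ 2 = 1`
    have hy' : y = (x ^ i.val)⁻¹ := eq_inv_of_mul_eq_one_left h
    have hx2 : x * x = 1 := by
      rw [← inv_eq_iff_mul_eq_one, ← hyx, hy']
      group
    have hxn : x ^ n = 1 := by
      rw [← hy, hy', inv_pow, ← pow_mul, mul_comm, pow_mul, sq, hx2, one_pow, inv_one]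
    have hdvd := orderOf_dvd_of_pow_eq_one hxn
    rw [hx] at hdvd
    linarith [Nat.le_of_dvd (NeZero.pos n) hdvd, NeZero.pos n]

lemma range_lift [NeZero n] (hx : x ^ (2 * n) = 1) (hy : y ^ 2 = x ^ n)
    (hyx : y * x * y⁻¹ = x⁻¹) : (lift hx hy hyx).range = Subgroup.closure {x, y} := by
  have hxQ : x ∈ Subgroup.closure {x, y} := Subgroup.subset_closure (by simp)
  have hyQ : y ∈ Subgroup.closure {x, y} := Subgroup.subset_closure (by simp)
  apply le_antisymm
  · rintro _ ⟨i | i, rfl⟩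
    · exact pow_mem hxQ _
    · exact mul_mem hyQ (pow_mem hxQ _)
  · rw [Subgroup.closure_le]
    rintro z (rfl | rfl)
    · refine ⟨a 1, ?_⟩
      show z ^ (1 : ZMod (2 * n)).val = z
      rw [← Nat.cast_one, pow_val_natCast hx, pow_one]
    · exact ⟨xa 0, by simp [lift]⟩

theorem nonempty_mulEquiv_closure [NeZero n] (hx : orderOf x = 2 * n) (hy : y ^ 2 = x ^ n)
    (hyx : y * x * y⁻¹ = x⁻¹) : Nonempty (Subgroup.closure {x, y} ≃* QuaternionGroup n) :=
  ⟨(MulEquiv.subgroupCongr (range_lift _ hy hyx).symm).trans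
    (MonoidHom.ofInjective (lift_injective hx hy hyx)).symm⟩

end QuaternionGroup

namespace Subgroup

variable {G : Type*} [Group G]

lemma mem_normalizer_zpowers {g a : G} (h : zpowers (g * a * g⁻¹) = zpowers a) :
    g ∈ normalizer (zpowers a) := by
  rw [mem_normalizer_iff_map_conj_eq, MonoidHom.map_zpowers]
  exact h

lemma exists_mul_of_mem_sup_of_le_normalizer {A Q : Subgroup G} (hQ : Q ≤ normalizer A)
    {g : G} (hg : g ∈ A ⊔ Q) : ∃ x ∈ A, ∃ q ∈ Q, g = x * q := by
  rw [← SetLike.mem_coe, coe_mul_of_right_le_normalizer_left A Q hQ] at hg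
  obtain ⟨x, hx, q, hq, rfl⟩ := hg
  exact ⟨x, hx, q, hq, rfl⟩

lemma card_sup_of_le_normalizer {A Q : Subgroup G} (hQ : Q ≤ normalizer A)
    (hAQ : Disjoint A Q) :
    Nat.card ↥(A ⊔ Q) = Nat.card A * Nat.card Q := by
  rw [← Nat.card_prod]
  refine (Nat.card_congr (Equiv.ofBijective
    (fun p : A × Q => (⟨p.1 * p.2, mul_mem_sup p.1.2 p.2.2⟩ : ↥(A ⊔ Q))) ⟨?_, ?_⟩)).symm
  · exact fun p p' h => mul_injective_of_disjoint hAQ (congrArg Subtype.val h)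
  · rintro ⟨g, hg⟩
    obtain ⟨x, hx, q, hq, rfl⟩ := exists_mul_of_mem_sup_of_le_normalizer hQ hg
    exact ⟨(⟨x, hx⟩, ⟨q, hq⟩), rfl⟩

end Subgroup

lemma SemidirectProduct.inr_mul_inl_mul_inr_inv {N H : Type*} [Group N] [Group H]
    {φ : H →* MulAut N} (h : H) (n : N) :
    (inr h : N ⋊[φ] H) * inl n * (inr h)⁻¹ = inl (φ h n) := by
  rw [inl_aut, map_inv]

section SemidirectQuaternion

variable {G : Type*} [Group G]

lemma sq_mul_eq_sq_sq {w t : G} (ht : t ^ 2 = 1) (htw : t * w * t⁻¹ = w ^ 3) :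
    (w * t) ^ 2 = (w ^ 2) ^ 2 := by
  calc (w * t) ^ 2 = w * (t * w * t⁻¹) * (t * t) := by rw [sq]; group
    _ = (w ^ 2) ^ 2 := by rw [htw, ← sq, ht]; group

lemma conj_sq_eq_inv {w t : G} (hw : w ^ 8 = 1) (htw : t * w * t⁻¹ = w ^ 3) :
    (w * t) * w ^ 2 * (w * t)⁻¹ = (w ^ 2)⁻¹ := by
  calc (w * t) * w ^ 2 * (w * t)⁻¹ = w * (t * w * t⁻¹) ^ 2 * w⁻¹ := by rw [conj_pow]; group
    _ = (w ^ 2)⁻¹ := by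
      rw [htw, ← mul_inv_eq_one, ← hw]
      group

theorem closure_semidirect_zpowers_quaternion {a x y : G} (ha : orderOf a = 3)
    (hx : orderOf x = 4) (hy : y ^ 2 = x ^ 2) (hyx : y * x * y⁻¹ = x⁻¹)
    (hxa : x * a * x⁻¹ = a⁻¹) (hya : y * a * y⁻¹ = a) :
    Nat.card (Subgroup.closure {a, x, y}) = 24 ∧
    Nat.card (Subgroup.zpowers a) = 3 ∧
    (∀ g ∈ Subgroup.closure {a, x, y},
      ∀ z ∈ Subgroup.zpowers a, g * z * g⁻¹ ∈ Subgroup.zpowers a) ∧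
    Nonempty ((Subgroup.closure {x, y}) ≃* QuaternionGroup 2) ∧
    Subgroup.zpowers a ⊓ Subgroup.closure {x, y} = ⊥ ∧
    (∀ g ∈ Subgroup.closure {a, x, y},
      ∃ z ∈ Subgroup.zpowers a, ∃ q ∈ Subgroup.closure {x, y}, g = z * q) ∧
    x * a * x⁻¹ = a⁻¹ ∧
    y * a * y⁻¹ = a := by
  set A := Subgroup.zpowers a
  set Q := Subgroup.closure {x, y}
  have hQ8 : Nonempty (Q ≃* QuaternionGroup 2) :=
    QuaternionGroup.nonempty_mulEquiv_closure (hx.trans rfl) hy hyx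
  have hcardQ : Nat.card Q = 8 := by
    obtain ⟨e⟩ := hQ8
    rw [Nat.card_congr e.toEquiv, Nat.card_eq_fintype_card, QuaternionGroup.card]
  have hcardA : Nat.card A = 3 := (Nat.card_zpowers a).trans ha
  have hAQ : Disjoint A Q :=
    Subgroup.disjoint_of_coprime_natCard (by rw [hcardA, hcardQ]; norm_num)
  have hQA : Q ≤ Subgroup.normalizer A := by
    rw [Subgroup.closure_le]
    rintro g (rfl | rfl)
    · exact Subgroup.mem_normalizer_zpowers (by rw [hxa, Subgroup.zpowers_inv])
    · exact Subgroup.mem_normalizer_zpowers (by rw [hya])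
  have hH : Subgroup.closure {a, x, y} = A ⊔ Q := by
    rw [Set.insert_eq, Subgroup.closure_union, ← Subgroup.zpowers_eq_closure]
  rw [hH]
  refine ⟨?_, hcardA, Subgroup.le_normalizer_iff.mp (sup_le Subgroup.le_normalizer hQA), hQ8,
    disjoint_iff.mp hAQ, fun g hg => Subgroup.exists_mul_of_mem_sup_of_le_normalizer hQA hg,
    hxa, hya⟩
  rw [Subgroup.card_sup_of_le_normalizer hQA hAQ, hcardA, hcardQ]

end SemidirectQuaternion

section EisensteinRoot

variable (R : Type*) {B : Type*} [CommRing R] [Ring B] [Algebra R B] [Invertible (2 : R)]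

/-- With `M` playing the role of `√-3`, this is the cube root of unity `(-1 - √-3) / 2`. -/
def eisensteinRoot (M : B) : B := -(⅟(2 : R) • (1 + M))

variable {R} {M : B}

lemma eisensteinRoot_mul_eisensteinRoot_neg (hM : M * M = -3) :
    eisensteinRoot R M * eisensteinRoot R (-M) = 1 := by
  have h3 : (-3 : B) = (-3 : R) • 1 := by rw [Algebra.smul_def, mul_one, map_neg, map_ofNat]
  simp only [eisensteinRoot, ← sub_eq_add_neg, neg_mul_neg, smul_mul_smul_comm, add_mul, mul_sub,
    one_mul, mul_one, hM, h3]
  match_scalars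
  · linear_combination (⅟(2 : R) * 2 + 1) * invOf_mul_self (2 : R)
  · ring

lemma eisensteinRoot_mul_self (hM : M * M = -3) :
    eisensteinRoot R M * eisensteinRoot R M = eisensteinRoot R (-M) := by
  have h3 : (-3 : B) = (-3 : R) • 1 := by rw [Algebra.smul_def, mul_one, map_neg, map_ofNat]
  simp only [eisensteinRoot, neg_mul_neg, smul_mul_smul_comm, add_mul, mul_add, one_mul, mul_one,
    hM, h3]
  match_scalars
  · linear_combination (-⅟(2 : R)) * invOf_mul_self (2 : R)
  · linear_combination ⅟(2 : R) * invOf_mul_self (2 : R)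

lemma eisensteinRoot_pow_three (hM : M * M = -3) : eisensteinRoot R M ^ 3 = 1 := by
  rw [pow_three, eisensteinRoot_mul_self hM, eisensteinRoot_mul_eisensteinRoot_neg hM]

lemma mul_eisensteinRoot_of_mul_eq {X M' : B} (h : X * M = M' * X) :
    X * eisensteinRoot R M = eisensteinRoot R M' * X := by
  simp only [eisensteinRoot, mul_neg, neg_mul, mul_smul_comm, smul_mul_assoc, mul_add, add_mul,
    mul_one, one_mul, h]

lemma eq_neg_three_of_eisensteinRoot_eq_one (h : eisensteinRoot R M = 1) : M = -3 := by
  calc M = (2 * ⅟2 : R) • (1 + M) - 1 := by rw [mul_invOf_self, one_smul, add_sub_cancel_left]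
    _ = -(2 : R) • eisensteinRoot R M - 1 := by
      rw [eisensteinRoot, mul_smul, smul_neg, neg_smul, neg_neg]
    _ = -3 := by rw [h, neg_smul, two_smul]; norm_num

end EisensteinRoot

section Matrices

lemma iw_mul (x y : Wq) : iw x * iw y = iw (x * y) := by
  simp [iw]

lemma iw_one : iw 1 = 1 := by
  simp [iw, Matrix.one_fin_two]

lemma iw_neg (x : Wq) : iw (-x) = -iw x := by
  simp [iw]

lemma iw_pow (x : Wq) (k : ℕ) : iw x ^ k = iw (x ^ k) := by
  induction k with
  | zero => rw [pow_zero, pow_zero, iw_one]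
  | succ k ih => rw [pow_succ, ih, iw_mul, pow_succ]

lemma φM_iw {x : Wq} (hx : σW (σW x) = x) : φM (iw x) = iw (σW x) := by
  rw [Matrix.eta_fin_two (φM _)]
  simp [φM, iw, hx]

lemma φM_Sm : φM Sm = Sm := by
  rw [Matrix.eta_fin_two (φM _)]
  simp [φM, Sm, map_ofNat]

lemma Sm_mul_iw {x : Wq} (hx : σW (σW x) = x) : Sm * iw x = iw (σW x) * Sm := by
  simp [Sm, iw, hx, mul_comm]

lemma Sm_mul_Sm : Sm * Sm = 3 := by
  rw [Matrix.ofNat_fin_two]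
  simp [Sm]

lemma φM_eisensteinRoot [Invertible (2 : Wq)] (X : Matrix (Fin 2) (Fin 2) Wq) :
    φM (eisensteinRoot Wq X) = eisensteinRoot Wq (φM X) := by
  have hσ : σW (⅟2) = ⅟2 := by
    have h : σW 2 * σW ⅟2 = 1 := by rw [← map_mul, mul_invOf_self, map_one]
    rw [map_ofNat] at h
    exact (invOf_eq_right_inv h).symm
  have hsmul (c : Wq) (Y : Matrix (Fin 2) (Fin 2) Wq) : φM (c • Y) = σW c • φM Y :=
    Matrix.map_smul' _ _ _ (map_mul σW)
  rw [eisensteinRoot, eisensteinRoot, map_neg, hsmul, hσ, map_add, map_one]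

variable {ω₀ : Wq}

lemma σW_σW_eq_self (hω₀ : ω₀ ^ 4 = -1) (hσω₀ : σW ω₀ = ω₀ ^ 3) : σW (σW ω₀) = ω₀ := by
  rw [hσω₀, map_pow, hσω₀, ← pow_mul]
  linear_combination (ω₀ ^ 4 - 1) * ω₀ * hω₀

lemma iw_mul_Sm_mul_self (hω₀ : ω₀ ^ 4 = -1) (hσω₀ : σW ω₀ = ω₀ ^ 3) :
    iw ω₀ * Sm * (iw ω₀ * Sm) = -3 := by
  calc iw ω₀ * Sm * (iw ω₀ * Sm) = iw ω₀ * (Sm * iw ω₀) * Sm := by simp only [mul_assoc]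
    _ = iw (ω₀ ^ 4) * (Sm * Sm) := by
      rw [Sm_mul_iw (σW_σW_eq_self hω₀ hσω₀), ← mul_assoc, iw_mul, hσω₀, ← pow_succ', mul_assoc]
    _ = -3 := by rw [hω₀, iw_neg, iw_one, Sm_mul_Sm, neg_one_mul]

lemma iw_sq_mul_iw_mul_Sm (hω₀ : ω₀ ^ 4 = -1) (hσω₀ : σW ω₀ = ω₀ ^ 3) :
    iw (ω₀ ^ 2) * (iw ω₀ * Sm) = -(iw ω₀ * Sm) * iw (ω₀ ^ 2) := by
  have hσσ : σW (σW (ω₀ ^ 2)) = ω₀ ^ 2 := by rw [map_pow, map_pow, σW_σW_eq_self hω₀ hσω₀]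
  rw [← mul_assoc, iw_mul, neg_mul, mul_assoc, Sm_mul_iw hσσ, ← mul_assoc, iw_mul, ← neg_mul,
    ← iw_neg, map_pow, hσω₀]
  congr 2
  linear_combination ω₀ ^ 3 * hω₀

lemma iw_mul_φM_iw_mul_Sm (hω₀ : ω₀ ^ 4 = -1) (hσω₀ : σW ω₀ = ω₀ ^ 3) :
    iw ω₀ * φM (iw ω₀ * Sm) = iw ω₀ * Sm * iw ω₀ := by
  rw [map_mul, φM_iw (σW_σW_eq_self hω₀ hσω₀), φM_Sm, mul_assoc (iw ω₀) Sm,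
    Sm_mul_iw (σW_σW_eq_self hω₀ hσω₀)]

end Matrices

section GeneralLinear

variable {ω₀ : Wq} {ωu au : GL (Fin 2) Wq}

lemma coe_pow_eq_iw (hωu : (ωu : Matrix (Fin 2) (Fin 2) Wq) = iw ω₀) (k : ℕ) :
    ((ωu ^ k : GL (Fin 2) Wq) : Matrix (Fin 2) (Fin 2) Wq) = iw (ω₀ ^ k) := by
  rw [Units.val_pow_eq_pow_val, hωu, iw_pow]

lemma orderOf_eq_eight_of_coe_eq_iw [Invertible (2 : Wq)] (hω₀ : ω₀ ^ 4 = -1)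
    (hωu : (ωu : Matrix (Fin 2) (Fin 2) Wq) = iw ω₀) : orderOf ωu = 8 := by
  refine orderOf_eq_prime_pow (p := 2) (n := 2) (fun h => ?_) (Units.ext ?_)
  · have h00 := congrArg (fun u : GL (Fin 2) Wq => (u : Matrix (Fin 2) (Fin 2) Wq) 0 0) h
    simp [coe_pow_eq_iw hωu, iw, hω₀] at h00
    exact Invertible.ne_zero (2 : Wq) (by linear_combination -h00)
  · rw [coe_pow_eq_iw hωu, Units.val_one, show 2 ^ (2 + 1) = 4 * 2 from rfl, pow_mul, hω₀]
    norm_num [iw_one]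

lemma mapEquiv_φM_eq_pow_three (hω₀ : ω₀ ^ 4 = -1) (hσω₀ : σW ω₀ = ω₀ ^ 3)
    (hωu : (ωu : Matrix (Fin 2) (Fin 2) Wq) = iw ω₀) :
    Units.mapEquiv φM.toMulEquiv ωu = ωu ^ 3 :=
  Units.ext <| by
    rw [Units.coe_mapEquiv, RingEquiv.toMulEquiv_eq_coe, RingEquiv.coe_toMulEquiv, hωu,
      φM_iw (σW_σW_eq_self hω₀ hσω₀), hσω₀, coe_pow_eq_iw hωu]

variable [Invertible (2 : Wq)]

lemma pow_three_eq_one_of_coe_eq_eisensteinRoot (hω₀ : ω₀ ^ 4 = -1) (hσω₀ : σW ω₀ = ω₀ ^ 3)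
    (hau : (au : Matrix (Fin 2) (Fin 2) Wq) = eisensteinRoot Wq (iw ω₀ * Sm)) : au ^ 3 = 1 :=
  Units.ext <| by
    rw [Units.val_pow_eq_pow_val, hau, eisensteinRoot_pow_three (iw_mul_Sm_mul_self hω₀ hσω₀),
      Units.val_one]

lemma orderOf_eq_three_of_coe_eq_eisensteinRoot (hω₀ : ω₀ ^ 4 = -1) (hσω₀ : σW ω₀ = ω₀ ^ 3)
    (hau : (au : Matrix (Fin 2) (Fin 2) Wq) = eisensteinRoot Wq (iw ω₀ * Sm)) :
    orderOf au = 3 := by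
  refine orderOf_eq_prime (pow_three_eq_one_of_coe_eq_eisensteinRoot hω₀ hσω₀ hau) fun h => ?_
  rw [h, Units.val_one, eq_comm] at hau
  have h10 := congrArg (· 1 0) (eq_neg_three_of_eisensteinRoot_eq_one hau)
  simp [iw, Sm, hσω₀, Matrix.ofNat_fin_two] at h10
  simp [h10] at hω₀

lemma conj_eq_inv_of_coe_eq_eisensteinRoot (hω₀ : ω₀ ^ 4 = -1) (hσω₀ : σW ω₀ = ω₀ ^ 3)
    (hωu : (ωu : Matrix (Fin 2) (Fin 2) Wq) = iw ω₀)
    (hau : (au : Matrix (Fin 2) (Fin 2) Wq) = eisensteinRoot Wq (iw ω₀ * Sm)) :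
    ωu ^ 2 * au * (ωu ^ 2)⁻¹ = au⁻¹ := by
  have h : ωu ^ 2 * au = au ^ 2 * ωu ^ 2 := Units.ext <| by
    rw [Units.val_mul, Units.val_mul, coe_pow_eq_iw hωu, Units.val_pow_eq_pow_val, hau,
      mul_eisensteinRoot_of_mul_eq (iw_sq_mul_iw_mul_Sm hω₀ hσω₀),
      ← eisensteinRoot_mul_self (iw_mul_Sm_mul_self hω₀ hσω₀), ← sq]
  rw [h, mul_inv_cancel_right, eq_inv_iff_mul_eq_one, ← pow_succ,
    pow_three_eq_one_of_coe_eq_eisensteinRoot hω₀ hσω₀ hau]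

lemma conj_mapEquiv_φM_of_coe_eq_eisensteinRoot (hω₀ : ω₀ ^ 4 = -1) (hσω₀ : σW ω₀ = ω₀ ^ 3)
    (hωu : (ωu : Matrix (Fin 2) (Fin 2) Wq) = iw ω₀)
    (hau : (au : Matrix (Fin 2) (Fin 2) Wq) = eisensteinRoot Wq (iw ω₀ * Sm)) :
    ωu * Units.mapEquiv φM.toMulEquiv au * ωu⁻¹ = au := by
  rw [mul_inv_eq_iff_eq_mul]
  refine Units.ext ?_
  rw [Units.val_mul, Units.val_mul, Units.coe_mapEquiv, RingEquiv.toMulEquiv_eq_coe,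
    RingEquiv.coe_toMulEquiv, hωu, hau, φM_eisensteinRoot,
    mul_eisensteinRoot_of_mul_eq (iw_mul_φM_iw_mul_Sm hω₀ hσω₀)]

end GeneralLinear

/-- in `G = GL₂(W) ⋊ C₂`, the subgroup `G₂₄ = ⟨a, ω², ωφ⟩` has exactly
`24` elements, `⟨a⟩` is a normal cyclic subgroup of order `3` of `G₂₄`,
`Q = ⟨ω², ωφ⟩ ≅ Q₈`, `⟨a⟩ ∩ Q = {1}` and `G₂₄ = ⟨a⟩·Q`; that is, `G₂₄` is an
internal semidirect product `C₃ ⋊ Q₈`, with `ω²` acting on `⟨a⟩` by inversion and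
`ωφ` acting trivially. -/
theorem statement6 [Invertible (2 : Wq)]
    (ω₀ : Wq) (hω₀ : ω₀ ^ 4 = -1) (hσω₀ : σW ω₀ = ω₀ ^ 3)
    (θ : C2 →* MulAut (GL (Fin 2) Wq))
    (hθ : θ (Multiplicative.ofAdd 1) = Units.mapEquiv φM.toMulEquiv)
    (ωu au : GL (Fin 2) Wq) (hωu : (ωu : Matrix (Fin 2) (Fin 2) Wq) = iw ω₀)
    (hau : (au : Matrix (Fin 2) (Fin 2) Wq)
      = -((⅟ (2 : Wq)) • ((1 : Matrix (Fin 2) (Fin 2) Wq) + iw ω₀ * Sm)))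
    (ωG φG aG : GL (Fin 2) Wq ⋊[θ] C2)
    (hωG : ωG = SemidirectProduct.inl ωu)
    (hφG : φG = SemidirectProduct.inr (Multiplicative.ofAdd 1))
    (haG : aG = SemidirectProduct.inl au) :
    Nat.card (Subgroup.closure {aG, ωG ^ 2, ωG * φG}) = 24 ∧
    Nat.card (Subgroup.zpowers aG) = 3 ∧
    (∀ g ∈ Subgroup.closure {aG, ωG ^ 2, ωG * φG},
      ∀ x ∈ Subgroup.zpowers aG, g * x * g⁻¹ ∈ Subgroup.zpowers aG) ∧
    Nonempty ((Subgroup.closure {ωG ^ 2, ωG * φG}) ≃* QuaternionGroup 2) ∧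
    Subgroup.zpowers aG ⊓ Subgroup.closure {ωG ^ 2, ωG * φG} = ⊥ ∧
    (∀ g ∈ Subgroup.closure {aG, ωG ^ 2, ωG * φG},
      ∃ x ∈ Subgroup.zpowers aG, ∃ q ∈ Subgroup.closure {ωG ^ 2, ωG * φG},
        g = x * q) ∧
    ωG ^ 2 * aG * (ωG ^ 2)⁻¹ = aG⁻¹ ∧
    (ωG * φG) * aG * (ωG * φG)⁻¹ = aG := by
  subst hωG hφG haG
  set t : GL (Fin 2) Wq ⋊[θ] C2 := SemidirectProduct.inr (Multiplicative.ofAdd 1)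
  have hconj (u : GL (Fin 2) Wq) : t * SemidirectProduct.inl u * t⁻¹ =
      SemidirectProduct.inl (Units.mapEquiv φM.toMulEquiv u) := by
    rw [SemidirectProduct.inr_mul_inl_mul_inr_inv, hθ]
  have ht : t ^ 2 = 1 := by rw [← map_pow]; exact map_one _
  have hω8 : orderOf (SemidirectProduct.inl ωu : GL (Fin 2) Wq ⋊[θ] C2) = 8 :=
    (orderOf_injective _ SemidirectProduct.inl_injective _).trans
      (orderOf_eq_eight_of_coe_eq_iw hω₀ hωu)
  have htw : t * SemidirectProduct.inl ωu * t⁻¹ = SemidirectProduct.inl ωu ^ 3 := by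
    rw [hconj, mapEquiv_φM_eq_pow_three hω₀ hσω₀ hωu, map_pow]
  refine closure_semidirect_zpowers_quaternion ?_ ?_ (sq_mul_eq_sq_sq ht htw)
    (conj_sq_eq_inv (hω8 ▸ pow_orderOf_eq_one _) htw) ?_ ?_
  · exact (orderOf_injective _ SemidirectProduct.inl_injective _).trans
      (orderOf_eq_three_of_coe_eq_eisensteinRoot hω₀ hσω₀ hau)
  · rw [orderOf_pow_of_dvd two_ne_zero (by rw [hω8]; norm_num), hω8]
  · rw [← map_pow, ← map_mul, ← map_inv, ← map_mul,
      conj_eq_inv_of_coe_eq_eisensteinRoot hω₀ hσω₀ hωu hau, map_inv]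
  · calc SemidirectProduct.inl ωu * t * SemidirectProduct.inl au
          * (SemidirectProduct.inl ωu * t)⁻¹
        = SemidirectProduct.inl ωu * (t * SemidirectProduct.inl au * t⁻¹)
          * (SemidirectProduct.inl ωu)⁻¹ := by group
      _ = SemidirectProduct.inl au := by
        rw [hconj, ← map_inv, ← map_mul, ← map_mul,
          conj_mapEquiv_φM_of_coe_eq_eisensteinRoot hω₀ hσω₀ hωu hau]
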